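/- Fix a finite nonempty alphabet Σ equipped with a linear order, and let Ξ := Σ ⊕ Σ'' ⊕ Sym with φ : FL_Σ → Ξ* the canonical encoding. A refusal-testing observation over Σ is a sequence ⟨X₀,a₁,X₁,…,aₙ,Xₙ⟩ with each aᵢ ∈ Σ and each Xᵢ either a subset of Σ (a refusal set) or •. Define the refusal testing relation rt_Σ, relating the observation ⟨A₀,a₁,…,aₙ,Aₙ⟩ ∈ FL_Σ to every ⟨X₀,a₁,…,aₙ,Xₙ⟩ such that for each i: Xᵢ ⊆ Σ \ Aᵢ if Aᵢ ≠ •, and Xᵢ = • if Aᵢ = •. Let Θ := Σ ⊕ Σ' ⊕ Sym, where Σ' is a disjoint copy of Σ, and define ψ(⟨X₀,a₁,…,aₙ,Xₙ⟩) = enc(X₀) a₁ enc(X₁) … aₙ enc(Xₙ), where enc(•) is the empty word and enc(X) is the symbol ⟨ followed by the primed copies of the elements of X in increasing order followed by the symbol ⟩. Then: (a) there exists a nondeterministic finite automaton with finitely many states over the alphabet Ξ ⊕ Θ recognising the relation {(φ(x), ψ(y)) : (x, y) ∈ rt_Σ}; and (b) ψ is order-reflecting, i.e. whenever ψ(y₁)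 is a prefix of ψ(y₂) then y₁ ≼ y₂, where ≼ is the relation induced by rt_Σ from the extension order on FL_Σ. -/

import Mathlib

/-- A finite linear observation over alphabet `α`: an initial annotation `A₀`
(`none` = `•`, `some A` = a stable acceptance set) together with a list of pairs
`(aᵢ, Aᵢ)` of an event and the following annotation. -/
abbrev FLObs (α : Type) := Option (Finset α) × List (α × Option (Finset α))

/-- Extension on annotations: either they are equal or the first is `•`. -/
def optExt {α : Type} (A B : Option (Finset α)) : Prop := A = B ∨ A = none

/-- The extension order on finite linear observations. -/
def extLE {α : Type} (u v : FLObs α) : Prop :=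
  optExt u.1 v.1 ∧ u.2.length ≤ v.2.length ∧
    ∀ (i : ℕ) (hi : i < u.2.length) (hj : i < v.2.length),
      (u.2.get ⟨i, hi⟩).1 = (v.2.get ⟨i, hj⟩).1 ∧
        optExt (u.2.get ⟨i, hi⟩).2 (v.2.get ⟨i, hj⟩).2

/-- The four symbols `⟨`, `⟩`, `,`, `•` used by the canonical encoding. -/
inductive MSym : Type
  | lang | rang | comma | bullet
deriving DecidableEq

instance : Fintype MSym where
  elems := {MSym.lang, MSym.rang, MSym.comma, MSym.bullet}
  complete := by intro x; cases x <;> simp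

/-- The alphabet `Ξ = Σ ⊕ Σ'' ⊕ MSym` of the canonical encoding: `Sum.inl a` is the
event `a`, `Sum.inr (Sum.inl a)` is the double-primed copy `a''`, and
`Sum.inr (Sum.inr s)` is a symbol. -/
abbrev Xi (α : Type) := α ⊕ α ⊕ MSym

/-- Encoding of an annotation: `•` is the symbol `•`, a set is the list of the
double-primed copies of its elements in increasing order. -/
def encAnnXi {α : Type} [LinearOrder α] : Option (Finset α) → List (Xi α)
  | none => [Sum.inr (Sum.inr MSym.bullet)]
  | some A => (A.sort (· ≤ ·)).map (fun a => Sum.inr (Sum.inl a))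

/-- The canonical encoding `φ` of finite linear observations: the observation
`⟨A₀, a₁, A₁, …, aₙ, Aₙ⟩` is written as the string `⟨ A₀ , a₁ , A₁ , … , aₙ , Aₙ ⟩`. -/
def phi {α : Type} [LinearOrder α] (u : FLObs α) : List (Xi α) :=
  [Sum.inr (Sum.inr MSym.lang)] ++ encAnnXi u.1 ++
    (u.2.map (fun p => [Sum.inr (Sum.inr MSym.comma), Sum.inl p.1,
      Sum.inr (Sum.inr MSym.comma)] ++ encAnnXi p.2)).flatten ++
    [Sum.inr (Sum.inr MSym.rang)]

/-- An NFA over `α ⊕ β` recognises a relation `R ⊆ α* × β*` if `R s t` holds exactly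
when the NFA accepts some interleaving of `s` (as left letters) and `t` (as right
letters). -/
def Recognises {α β Q : Type} (A : NFA (α ⊕ β) Q) (R : List α → List β → Prop) : Prop :=
  ∀ (s : List α) (t : List β),
    R s t ↔ ∃ w ∈ A.accepts, w.filterMap Sum.getLeft? = s ∧ w.filterMap Sum.getRight? = t

/-- The relation on `O` induced by a relation `M : S → O → Prop` from a preorder
`le` on `S`. -/
def inducedRel {S O : Type} (le : S → S → Prop) (M : S → O → Prop) (y₁ y₂ : O) : Prop :=
  ∀ b, M b y₂ → ∃ a, M a y₁ ∧ le a b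

/-- The final annotation `Aₙ` of an observation. -/
def lastAnn {α : Type} (u : FLObs α) : Option (Finset α) :=
  match u.2.getLast? with
  | none => u.1
  | some p => p.2


/-- Compatibility of a refusal annotation `X` with an acceptance annotation `A`:
if `A = •` then `X = •`; if `A` is an acceptance set then `X` is a refusal set
disjoint from `A` (i.e. `X ⊆ Σ \ A`). -/
def compat {α : Type} (A X : Option (Finset α)) : Prop :=
  match A, X with
  | none, none => True
  | some A, some Y => ∀ a ∈ Y, a ∉ A
  | _, _ => False

/-- The output alphabet `Θ = Σ ⊕ Σ' ⊕ Sym`: `Sum.inl a` is the event `a`,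
`Sum.inr (Sum.inl a)` is the primed copy `a'`, and `Sum.inr (Sum.inr s)` a symbol. -/
abbrev Theta (α : Type) := α ⊕ α ⊕ MSym

/-- Encoding of an optional refusal set: `•` contributes the empty word and a set `X`
contributes `⟨` followed by the primed copies of its elements in increasing order
followed by `⟩`. -/
def encRef {α : Type} [LinearOrder α] : Option (Finset α) → List (Theta α)
  | none => []
  | some X => [Sum.inr (Sum.inr MSym.lang)] ++
      (X.sort (· ≤ ·)).map (fun a => Sum.inr (Sum.inl a)) ++ [Sum.inr (Sum.inr MSym.rang)]

/-- The refusal testing relation: it relates `⟨A₀,a₁,…,aₙ,Aₙ⟩ ∈ FL_Σ` to every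
refusal-testing observation `⟨X₀,a₁,…,aₙ,Xₙ⟩` (same events) such that for each `i`,
`Xᵢ ⊆ Σ \ Aᵢ` if `Aᵢ ≠ •` and `Xᵢ = •` if `Aᵢ = •`. A refusal-testing observation is
represented in the same way as a finite linear observation, with annotations read as
refusal sets. -/
def rtRel {α : Type} (u v : FLObs α) : Prop :=
  compat u.1 v.1 ∧ u.2.length = v.2.length ∧
    ∀ (i : ℕ) (hi : i < u.2.length) (hj : i < v.2.length),
      (u.2.get ⟨i, hi⟩).1 = (v.2.get ⟨i, hj⟩).1 ∧
        compat (u.2.get ⟨i, hi⟩).2 (v.2.get ⟨i, hj⟩).2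

/-- The output encoding for refusal testing:
`ψ ⟨X₀,a₁,…,aₙ,Xₙ⟩ = enc(X₀) a₁ enc(X₁) … aₙ enc(Xₙ)` where `enc(•)` is empty and
`enc(X)` is `⟨` followed by the primed copies of the elements of `X` in increasing
order followed by `⟩`. -/
def psiRT {α : Type} [LinearOrder α] (v : FLObs α) : List (Theta α) :=
  encRef v.1 ++ (v.2.map (fun p => Sum.inl p.1 :: encRef p.2)).flatten

/-
(a) The automaton reads `φ x` and writes `ψ y` in lockstep: it copies every event to the output
and turns `•` into the empty word. For a set annotation it runs through the acceptance set `A`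
(read) and the refusal set `X` (written) merged into one strictly increasing sequence; strict
increase makes both lists sorted and disjoint, which is exactly `X ⊆ Σ \ A`. Since it only has
to remember the last element of that sequence, finitely many states suffice.

(b) Every refusal set in `ψ y` is enclosed in brackets and is followed by an event, so if
`ψ y₁` is a prefix of `ψ y₂` then `y₁` extends to `y₂`. Extension is then reflected by `rt`:
a witness for `y₂` is cut down to the length of `y₁` and its annotations are replaced by `•`
wherever `y₁` has `•`.
-/

namespace NFA

variable {T σ : Type} (M : NFA T σ)

theorem mem_evalFrom_singleton_cons {s u : σ} {a : T} {x : List T} :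
    u ∈ M.evalFrom {s} (a :: x) ↔ ∃ t ∈ M.step s a, u ∈ M.evalFrom {t} x := by
  rw [evalFrom_cons, stepSet_singleton, mem_evalFrom_iff_exists]

theorem mem_evalFrom_singleton_append {s t u : σ} {x y : List T}
    (hx : t ∈ M.evalFrom {s} x) (hy : u ∈ M.evalFrom {t} y) : u ∈ M.evalFrom {s} (x ++ y) := by
  rw [evalFrom_append, mem_evalFrom_iff_exists]
  exact ⟨t, hx, hy⟩

theorem exists_fin_accepts_eq [Finite σ] :
    ∃ n, ∃ M' : NFA T (Fin n), M'.accepts = M.accepts := by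
  obtain ⟨n, ⟨e⟩⟩ := Finite.exists_equiv_fin (Set σ)
  exact ⟨n, (DFA.reindex e M.toDFA).toNFA, by simp [DFA.accepts_reindex, toDFA_correct]⟩

end NFA

theorem Finset.sort_filter {β : Type} (r : β → β → Prop) [DecidableRel r] [IsTrans β r]
    [Std.Antisymm r] [Std.Total r] [DecidableEq β] (s : Finset β) (p : β → Prop) [DecidablePred p] :
    (s.sort r).filter p = (s.filter p).sort r := by
  have hnodup := (s.sort_nodup r).filter (fun b => decide (p b))
  rw [← (List.toFinset_sort r hnodup).mpr ((s.pairwise_sort r).sublist List.filter_sublist),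
    List.toFinset_filter, Finset.sort_toFinset]
  simp only [decide_eq_true_eq]

theorem List.append_cons_prefix_append_cons {β : Type} {l₁ l₂ t₁ t₂ : List β} {c : β}
    (h₁ : c ∉ l₁) (h₂ : c ∉ l₂) (h : l₁ ++ c :: t₁ <+: l₂ ++ c :: t₂) : l₁ = l₂ ∧ t₁ <+: t₂ := by
  induction l₁ generalizing l₂ with
  | nil =>
    cases l₂ with
    | nil => exact ⟨rfl, (List.cons_prefix_cons.mp h).2⟩
    | cons b l₂ =>
      obtain ⟨rfl, -⟩ := List.cons_prefix_cons.mp h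
      exact absurd List.mem_cons_self h₂
  | cons a l₁ ih =>
    cases l₂ with
    | nil =>
      obtain ⟨rfl, -⟩ := List.cons_prefix_cons.mp h
      exact absurd List.mem_cons_self h₁
    | cons b l₂ =>
      simp only [List.cons_append, List.cons_prefix_cons] at h
      obtain ⟨rfl, h⟩ := h
      obtain ⟨rfl, ht⟩ := ih (fun hc => h₁ (.tail _ hc)) (fun hc => h₂ (.tail _ hc)) h
      exact ⟨rfl, ht⟩

theorem inducedRel_forall₂ {S O : Type} {le : S → S → Prop} {M : S → O → Prop}
    {R : O → O → Prop} (h : ∀ x y, R x y → inducedRel le M x y) :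
    ∀ {l₁ l₂}, List.Forall₂ R l₁ l₂ → inducedRel (List.Forall₂ le) (List.Forall₂ M) l₁ l₂
  | _, _, .nil, _, hb => ⟨[], .nil, by cases hb; exact .nil⟩
  | _, _, .cons hxy hl, _, .cons hbx hbl => by
    obtain ⟨a, hax, hab⟩ := h _ _ hxy _ hbx
    obtain ⟨la, hla, hlab⟩ := inducedRel_forall₂ h hl _ hbl
    exact ⟨a :: la, .cons hax hla, .cons hab hlab⟩

namespace RefusalTesting

variable {α : Type}

def compatEntry (p q : α × Option (Finset α)) : Prop := p.1 = q.1 ∧ compat p.2 q.2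

theorem rtRel_iff {x y : FLObs α} :
    rtRel x y ↔ compat x.1 y.1 ∧ List.Forall₂ compatEntry x.2 y.2 := by
  rw [rtRel, List.forall₂_iff_get]
  rfl

def extEntry (p q : α × Option (Finset α)) : Prop := p.1 = q.1 ∧ optExt p.2 q.2

theorem extLE_iff {x y : FLObs α} :
    extLE x y ↔ optExt x.1 y.1 ∧ ∃ m, m <+: y.2 ∧ List.Forall₂ extEntry x.2 m := by
  refine and_congr_right fun _ => ⟨fun ⟨hlen, h⟩ => ⟨_, List.take_prefix x.2.length y.2, ?_⟩, ?_⟩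
  · rw [List.forall₂_iff_get]
    exact ⟨by simpa using hlen,
      fun i hi hj => by simpa [extEntry] using h i hi (hj.trans_le (List.length_take_le' _ _))⟩
  · rintro ⟨m, hm, hxm⟩
    have hlen := hxm.length_eq
    refine ⟨hlen ▸ hm.length_le, fun i hi hj => ?_⟩
    simpa [extEntry, hm.getElem] using hxm.get hi (hlen ▸ hi)

theorem inducedRel_of_optExt {X Y : Option (Finset α)} (h : optExt X Y) :
    inducedRel optExt compat X Y := by
  intro B hB
  rcases h with rfl | rfl
  · exact ⟨B, hB, Or.inl rfl⟩
  · exact ⟨none, trivial, Or.inr rfl⟩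

theorem inducedRel_of_extEntry {p q : α × Option (Finset α)} (h : extEntry p q) :
    inducedRel extEntry compatEntry p q := by
  rintro ⟨b, B⟩ ⟨hb, hB⟩
  obtain ⟨A, hA, hAB⟩ := inducedRel_of_optExt h.2 B hB
  exact ⟨(p.1, A), ⟨rfl, hA⟩, h.1.trans hb.symm, hAB⟩

theorem inducedRel_of_extLE {y₁ y₂ : FLObs α} (h : extLE y₁ y₂) : inducedRel extLE rtRel y₁ y₂ := by
  obtain ⟨hX, m, hm, hlm⟩ := extLE_iff.mp h
  rintro ⟨B, lb⟩ hb
  obtain ⟨hB, hlb⟩ := rtRel_iff.mp hb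
  obtain ⟨A, hA, hAB⟩ := inducedRel_of_optExt hX B hB
  rw [List.prefix_iff_eq_take] at hm
  have hlb' := List.forall₂_take m.length hlb
  rw [← hm] at hlb'
  obtain ⟨la, hla, hlab⟩ := inducedRel_forall₂ (fun _ _ => inducedRel_of_extEntry) hlm _ hlb'
  exact ⟨(A, la), rtRel_iff.mpr ⟨hA, hla⟩, extLE_iff.mpr ⟨hAB, _, List.take_prefix _ _, hlab⟩⟩

variable [LinearOrder α]

attribute [local simp] List.filterMap_cons

inductive State (α : Type) : Type
  | start | ann | inSet (last : Option α) | afterAnn | event | echo (a : α) | closeEvent | done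
  deriving Fintype

/- The letter `.inl c` is read on the input tape `Ξ` and `.inr c` is written on the output
tape `Θ`. In a set annotation the automaton merges the acceptance set (input) with the refusal
set (output) into one strictly increasing sequence, remembering its last element. -/
inductive Step : State α → Xi α ⊕ Theta α → State α → Prop
  | openObs : Step .start (.inl (.inr (.inr .lang))) .ann
  | bullet : Step .ann (.inl (.inr (.inr .bullet))) .afterAnn
  | openSet : Step .ann (.inr (.inr (.inr .lang))) (.inSet none)
  | accepted {o : Option α} {a : α} : (∀ b ∈ o, b < a) →
      Step (.inSet o) (.inl (.inr (.inl a))) (.inSet a)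
  | refused {o : Option α} {a : α} : (∀ b ∈ o, b < a) →
      Step (.inSet o) (.inr (.inr (.inl a))) (.inSet a)
  | closeSet {o : Option α} : Step (.inSet o) (.inr (.inr (.inr .rang))) .afterAnn
  | closeObs : Step .afterAnn (.inl (.inr (.inr .rang))) .done
  | openEvent : Step .afterAnn (.inl (.inr (.inr .comma))) .event
  | event (a : α) : Step .event (.inl (.inl a)) (.echo a)
  | echo (a : α) : Step (.echo a) (.inr (.inl a)) .closeEvent
  | closeEvent : Step .closeEvent (.inl (.inr (.inr .comma))) .ann

variable (α) in
def rtNFA : NFA (Xi α ⊕ Theta α) (State α) where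
  step q c := {q' | Step q c q'}
  start := {.start}
  accept := {.done}

theorem Step.mem_evalFrom_cons {q q' q'' : State α} {c : Xi α ⊕ Theta α} {w : List (Xi α ⊕ Theta α)}
    (h : Step q c q') (hw : q'' ∈ (rtNFA α).evalFrom {q'} w) :
    q'' ∈ (rtNFA α).evalFrom {q} (c :: w) :=
  (NFA.mem_evalFrom_singleton_cons _).mpr ⟨q', h, hw⟩

def phiTail (l : List (α × Option (Finset α))) : List (Xi α) :=
  (l.map fun p => [.inr (.inr .comma), .inl p.1, .inr (.inr .comma)] ++ encAnnXi p.2).flatten ++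
    [.inr (.inr .rang)]

def psiTail (l : List (α × Option (Finset α))) : List (Theta α) :=
  (l.map fun p => .inl p.1 :: encRef p.2).flatten

theorem phi_eq (x : FLObs α) : phi x = .inr (.inr .lang) :: (encAnnXi x.1 ++ phiTail x.2) := by
  simp [phi, phiTail]

theorem psiRT_eq (y : FLObs α) : psiRT y = encRef y.1 ++ psiTail y.2 := rfl

@[simp] theorem phiTail_nil : phiTail ([] : List (α × Option (Finset α))) = [.inr (.inr .rang)] :=
  rfl

@[simp] theorem phiTail_cons (p : α × Option (Finset α)) (l) :
    phiTail (p :: l) =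
      .inr (.inr .comma) :: .inl p.1 :: .inr (.inr .comma) :: (encAnnXi p.2 ++ phiTail l) := by
  simp [phiTail]

@[simp] theorem psiTail_nil : psiTail ([] : List (α × Option (Finset α))) = [] := rfl

@[simp] theorem psiTail_cons (p : α × Option (Finset α)) (l) :
    psiTail (p :: l) = .inl p.1 :: (encRef p.2 ++ psiTail l) := by
  simp [psiTail]

def TailResidual (s : List (Xi α)) (t : List (Theta α)) : Prop :=
  ∃ l m, List.Forall₂ compatEntry l m ∧ s = phiTail l ∧ t = psiTail m

def AnnResidual (s : List (Xi α)) (t : List (Theta α)) : Prop :=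
  ∃ A X, compat A X ∧ ∃ s' t', TailResidual s' t' ∧ s = encAnnXi A ++ s' ∧ t = encRef X ++ t'

/- What the remainder of an accepting run from each state projects to on the two tapes. -/
def Residual : State α → List (Xi α) → List (Theta α) → Prop
  | .start, s, t => ∃ x y, rtRel x y ∧ s = phi x ∧ t = psiRT y
  | .ann, s, t => AnnResidual s t
  | .inSet o, s, t => ∃ A X : Finset α, Disjoint A X ∧ (∀ c ∈ o, ∀ b ∈ A ∪ X, c < b) ∧
      ∃ s' t', TailResidual s' t' ∧ s = (A.sort (· ≤ ·)).map (fun a => .inr (.inl a)) ++ s' ∧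
        t = (X.sort (· ≤ ·)).map (fun a => .inr (.inl a)) ++ .inr (.inr .rang) :: t'
  | .afterAnn, s, t => TailResidual s t
  | .event, s, t => ∃ a s' t', AnnResidual s' t' ∧
      s = .inl a :: .inr (.inr .comma) :: s' ∧ t = .inl a :: t'
  | .echo a, s, t => ∃ s' t', AnnResidual s' t' ∧ s = .inr (.inr .comma) :: s' ∧ t = .inl a :: t'
  | .closeEvent, s, t => ∃ s', AnnResidual s' t ∧ s = .inr (.inr .comma) :: s'
  | .done, s, t => s = [] ∧ t = []

theorem sort_insert_of_lt {a : α} {A : Finset α} (h : ∀ b ∈ A, a < b) :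
    (insert a A).sort (· ≤ ·) = a :: A.sort (· ≤ ·) :=
  Finset.sort_insert _ (fun b hb => (h b hb).le) (fun ha => lt_irrefl a (h a ha))

theorem lt_mem_insert_of_lt {o : Option α} {a : α} (hoa : ∀ c ∈ o, c < a) {S : Finset α}
    (haS : ∀ b ∈ S, a < b) : ∀ c ∈ o, ∀ b ∈ insert a S, c < b := by
  intro c hc b hb
  rcases Finset.mem_insert.mp hb with rfl | hb
  · exact hoa c hc
  · exact (hoa c hc).trans (haS b hb)

theorem residual_inSet_cons {o : Option α} {a : α} (hoa : ∀ c ∈ o, c < a) {s : List (Xi α)}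
    {t : List (Theta α)} (h : Residual (.inSet a) s t) :
    Residual (.inSet o) (.inr (.inl a) :: s) t ∧ Residual (.inSet o) s (.inr (.inl a) :: t) := by
  obtain ⟨A, X, hAX, ha, s, t, hst, rfl, rfl⟩ := h
  simp only [Option.mem_def, Option.some.injEq, forall_eq', Finset.mem_union] at ha
  have hao : ∀ c ∈ o, ∀ b ∈ insert a (A ∪ X), c < b :=
    lt_mem_insert_of_lt hoa fun b hb => ha b (Finset.mem_union.mp hb)
  constructor
  · refine ⟨insert a A, X, ?_, by rwa [Finset.insert_union], s, t, hst, ?_, rfl⟩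
    · exact Finset.disjoint_insert_left.mpr ⟨fun h => lt_irrefl a (ha a (Or.inr h)), hAX⟩
    · simp [sort_insert_of_lt fun b hb => ha b (Or.inl hb)]
  · refine ⟨A, insert a X, ?_, by rwa [Finset.union_insert], s, t, hst, rfl, ?_⟩
    · exact Finset.disjoint_insert_right.mpr ⟨fun h => lt_irrefl a (ha a (Or.inl h)), hAX⟩
    · simp [sort_insert_of_lt fun b hb => ha b (Or.inr hb)]

theorem residual_of_step {q q' : State α} {c : Xi α ⊕ Theta α} (h : Step q c q')
    {w : List (Xi α ⊕ Theta α)}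
    (hw : Residual q' (w.filterMap Sum.getLeft?) (w.filterMap Sum.getRight?)) :
    Residual q ((c :: w).filterMap Sum.getLeft?) ((c :: w).filterMap Sum.getRight?) := by
  cases h with
  | openObs =>
    obtain ⟨A, X, hAX, s, t, ⟨l, m, hlm, rfl, rfl⟩, hs, ht⟩ := hw
    exact ⟨(A, l), (X, m), rtRel_iff.mpr ⟨hAX, hlm⟩, by simp [hs, phi_eq], by simp [ht, psiRT_eq]⟩
  | bullet => exact ⟨none, none, trivial, _, _, hw, by simp [encAnnXi], by simp [encRef]⟩
  | openSet =>
    obtain ⟨A, X, hAX, -, s, t, hst, hs, ht⟩ := hw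
    exact ⟨some A, some X, fun a ha => Finset.disjoint_right.mp hAX ha, s, t, hst,
      by simp [hs, encAnnXi], by simp [ht, encRef]⟩
  | accepted hoa => simpa using (residual_inSet_cons hoa hw).1
  | refused hoa => simpa using (residual_inSet_cons hoa hw).2
  | closeSet => exact ⟨∅, ∅, by simp, by simp, _, _, hw, by simp, by simp⟩
  | closeObs =>
    obtain ⟨hs, ht⟩ := hw
    exact ⟨[], [], .nil, by simp [hs], by simp [ht]⟩
  | openEvent =>
    obtain ⟨a, -, -, ⟨A, X, hAX, s, t, ⟨l, m, hlm, rfl, rfl⟩, rfl, rfl⟩, hs, ht⟩ := hw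
    exact ⟨(a, A) :: l, (a, X) :: m, .cons ⟨rfl, hAX⟩ hlm, by simp [hs], by simp [ht]⟩
  | event a =>
    obtain ⟨s, t, hst, hs, ht⟩ := hw
    exact ⟨a, s, t, hst, by simp [hs], by simp [ht]⟩
  | echo a =>
    obtain ⟨s, hst, hs⟩ := hw
    exact ⟨s, _, hst, by simp [hs], by simp⟩
  | closeEvent => exact ⟨_, hw, by simp⟩

theorem residual_of_mem_evalFrom {q : State α} {w : List (Xi α ⊕ Theta α)}
    (h : State.done ∈ (rtNFA α).evalFrom {q} w) :
    Residual q (w.filterMap Sum.getLeft?) (w.filterMap Sum.getRight?) := by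
  induction w generalizing q with
  | nil =>
    obtain rfl : State.done = q := h
    exact ⟨rfl, rfl⟩
  | cons c w ih =>
    obtain ⟨q', hq', hw⟩ := (NFA.mem_evalFrom_singleton_cons _).mp h
    exact residual_of_step hq' (ih hw)

def tag (A : Finset α) (a : α) : Xi α ⊕ Theta α :=
  if a ∈ A then .inl (.inr (.inl a)) else .inr (.inr (.inl a))

theorem filterMap_getLeft?_map_tag (A : Finset α) (l : List α) :
    (l.map (tag A)).filterMap Sum.getLeft? =
      (l.filter (· ∈ A)).map fun a => .inr (.inl a) := by
  induction l with
  | nil => rfl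
  | cons a l ih => by_cases h : a ∈ A <;> simp [tag, h, ih]

theorem filterMap_getRight?_map_tag (A : Finset α) (l : List α) :
    (l.map (tag A)).filterMap Sum.getRight? =
      (l.filter (· ∉ A)).map fun a => .inr (.inl a) := by
  induction l with
  | nil => rfl
  | cons a l ih => by_cases h : a ∈ A <;> simp [tag, h, ih]

theorem mem_evalFrom_inSet (A : Finset α) {l : List α} (hl : l.Pairwise (· < ·)) {o : Option α}
    (ho : ∀ c ∈ o, ∀ b ∈ l, c < b) :
    State.afterAnn ∈
      (rtNFA α).evalFrom {.inSet o} (l.map (tag A) ++ [.inr (.inr (.inr .rang))]) := by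
  induction l generalizing o with
  | nil => exact Step.closeSet.mem_evalFrom_cons rfl
  | cons a l ih =>
    rw [List.pairwise_cons] at hl
    have hoa : ∀ c ∈ o, c < a := fun c hc => ho c hc a List.mem_cons_self
    have hstep : Step (.inSet o) (tag A a) (.inSet a) := by
      unfold tag
      split_ifs
      exacts [.accepted hoa, .refused hoa]
    exact hstep.mem_evalFrom_cons (ih hl.2 (by simpa using hl.1))

theorem exists_mem_evalFrom_ann {A X : Option (Finset α)} (h : compat A X) :
    ∃ w, State.afterAnn ∈ (rtNFA α).evalFrom {.ann} w ∧
      w.filterMap Sum.getLeft? = encAnnXi A ∧ w.filterMap Sum.getRight? = encRef X := by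
  match A, X, h with
  | none, none, _ =>
    exact ⟨[.inl (.inr (.inr .bullet))], Step.bullet.mem_evalFrom_cons rfl, rfl, rfl⟩
  | some A, some X, h =>
    have hA : (A ∪ X).filter (· ∈ A) = A := by ext; simp
    have hX : (A ∪ X).filter (· ∉ A) = X := by
      ext b
      have := h b
      simp only [Finset.mem_filter, Finset.mem_union]
      tauto
    refine ⟨.inr (.inr (.inr .lang)) ::
        (((A ∪ X).sort (· ≤ ·)).map (tag A) ++ [.inr (.inr (.inr .rang))]),
      Step.openSet.mem_evalFrom_cons
        (mem_evalFrom_inSet A (Finset.sortedLT_sort _).pairwise (by simp)), ?_, ?_⟩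
    · simp only [List.filterMap_cons, Sum.getLeft?_inr, List.filterMap_append,
        filterMap_getLeft?_map_tag, Finset.sort_filter, hA]
      simp [encAnnXi]
    · simp only [List.filterMap_cons, Sum.getRight?_inr, List.filterMap_append,
        filterMap_getRight?_map_tag, Finset.sort_filter, hX]
      simp [encRef]

theorem exists_mem_evalFrom_afterAnn {l m : List (α × Option (Finset α))}
    (h : List.Forall₂ compatEntry l m) :
    ∃ w, State.done ∈ (rtNFA α).evalFrom {.afterAnn} w ∧
      w.filterMap Sum.getLeft? = phiTail l ∧ w.filterMap Sum.getRight? = psiTail m := by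
  induction h with
  | nil =>
    exact ⟨[.inl (.inr (.inr .rang))], Step.closeObs.mem_evalFrom_cons rfl, rfl, rfl⟩
  | @cons p q l m hpq _ ih =>
    obtain ⟨w, hw, hwl, hwr⟩ := ih
    obtain ⟨u, hu, hul, hur⟩ := exists_mem_evalFrom_ann hpq.2
    refine ⟨.inl (.inr (.inr .comma)) :: .inl (.inl p.1) :: .inr (.inl p.1) ::
      .inl (.inr (.inr .comma)) :: (u ++ w), ?_, ?_, ?_⟩
    · exact Step.openEvent.mem_evalFrom_cons <| (Step.event _).mem_evalFrom_cons <|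
        (Step.echo _).mem_evalFrom_cons <| Step.closeEvent.mem_evalFrom_cons <|
        NFA.mem_evalFrom_singleton_append _ hu hw
    · simp [hul, hwl]
    · simp [hur, hwr, hpq.1]

theorem exists_mem_accepts_of_rtRel {x y : FLObs α} (h : rtRel x y) :
    ∃ w ∈ (rtNFA α).accepts,
      w.filterMap Sum.getLeft? = phi x ∧ w.filterMap Sum.getRight? = psiRT y := by
  obtain ⟨hxy, hl⟩ := rtRel_iff.mp h
  obtain ⟨u, hu, hul, hur⟩ := exists_mem_evalFrom_ann hxy
  obtain ⟨w, hw, hwl, hwr⟩ := exists_mem_evalFrom_afterAnn hl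
  refine ⟨.inl (.inr (.inr .lang)) :: (u ++ w), ⟨.done, rfl, ?_⟩, ?_, ?_⟩
  · exact Step.openObs.mem_evalFrom_cons (NFA.mem_evalFrom_singleton_append _ hu hw)
  · simp [hul, hwl, phi_eq]
  · simp [hur, hwr, psiRT_eq]

theorem rtNFA_recognises :
    Recognises (rtNFA α) fun s t => ∃ x y, s = phi x ∧ t = psiRT y ∧ rtRel x y := by
  intro s t
  constructor
  · rintro ⟨x, y, rfl, rfl, hxy⟩
    exact exists_mem_accepts_of_rtRel hxy
  · rintro ⟨w, ⟨_, rfl, hw⟩, rfl, rfl⟩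
    obtain ⟨x, y, hxy, hx, hy⟩ := residual_of_mem_evalFrom hw
    exact ⟨x, y, hx, hy, hxy⟩

theorem optExt_of_encRef_append_prefix {X₁ X₂ : Option (Finset α)} {t₁ t₂ : List (Theta α)}
    (ht₁ : ∀ c ∈ t₁.head?, c.isLeft) (ht₂ : ∀ c ∈ t₂.head?, c.isLeft)
    (h : encRef X₁ ++ t₁ <+: encRef X₂ ++ t₂) : optExt X₁ X₂ ∧ t₁ <+: t₂ := by
  match X₁, X₂, t₁, t₂ with
  | none, none, _, _ => exact ⟨Or.inl rfl, h⟩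
  | none, some _, [], _ => exact ⟨Or.inr rfl, List.nil_prefix⟩
  | none, some _, c :: _, _ =>
    obtain ⟨rfl, -⟩ := List.cons_prefix_cons.mp h
    simp at ht₁
  | some _, none, _, [] => simpa [encRef] using h.length_le
  | some _, none, _, c :: _ =>
    obtain ⟨rfl, -⟩ := List.cons_prefix_cons.mp h
    simp at ht₂
  | some S₁, some S₂, t₁, t₂ =>
    simp only [encRef, List.cons_append, List.cons_prefix_cons,
      List.append_assoc, true_and] at h
    obtain ⟨hS, ht⟩ := List.append_cons_prefix_append_cons (by simp) (by simp) h
    refine ⟨Or.inl ?_, ht⟩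
    rw [← Finset.sort_toFinset S₁ (· ≤ ·), ← Finset.sort_toFinset S₂ (· ≤ ·),
      List.map_injective_iff.mpr (fun _ _ h => by simpa using h) hS]

theorem psiTail_head?_isLeft (l : List (α × Option (Finset α))) :
    ∀ c ∈ (psiTail l).head?, c.isLeft := by
  cases l <;> simp

theorem extLE_of_psiRT_prefix {y₁ y₂ : FLObs α} (h : psiRT y₁ <+: psiRT y₂) : extLE y₁ y₂ := by
  obtain ⟨X₁, l₁⟩ := y₁
  obtain ⟨X₂, l₂⟩ := y₂
  rw [extLE_iff]
  induction l₁ generalizing X₁ X₂ l₂ with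
  | nil =>
    exact ⟨(optExt_of_encRef_append_prefix (by simp) (psiTail_head?_isLeft _) h).1,
      [], List.nil_prefix, .nil⟩
  | cons p l₁ ih =>
    obtain ⟨hX, ht⟩ :=
      optExt_of_encRef_append_prefix (psiTail_head?_isLeft _) (psiTail_head?_isLeft _) h
    cases l₂ with
    | nil => simpa using ht.length_le
    | cons q l₂ =>
      simp only [psiTail_cons, List.cons_prefix_cons, Sum.inl.injEq] at ht
      obtain ⟨hY, m, hm, hlm⟩ := ih p.2 q.2 l₂ ht.2
      exact ⟨hX, q :: m, List.cons_prefix_cons.mpr ⟨rfl, hm⟩, .cons ⟨ht.1, hY⟩ hlm⟩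

end RefusalTesting

theorem stmt11_general {α : Type} [Fintype α] [LinearOrder α] :
    (∃ (n : ℕ) (A : NFA (Xi α ⊕ Theta α) (Fin n)),
      Recognises A (fun s t => ∃ (x y : FLObs α), s = phi x ∧ t = psiRT y ∧ rtRel x y)) ∧
    (∀ y₁ y₂ : FLObs α, psiRT y₁ <+: psiRT y₂ → inducedRel extLE rtRel y₁ y₂) := by
  obtain ⟨n, M, hM⟩ := (RefusalTesting.rtNFA α).exists_fin_accepts_eq
  refine ⟨⟨n, M, fun s t => ?_⟩, fun y₁ y₂ h => ?_⟩
  · rw [hM]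
    exact RefusalTesting.rtNFA_recognises s t
  · exact RefusalTesting.inducedRel_of_extLE (RefusalTesting.extLE_of_psiRT_prefix h)

/-- The refusal testing model `RT` is rational: (a) there is an NFA with finitely many
states over `Ξ ⊕ Θ` recognising `{(φ x, ψ y) : (x, y) ∈ rt_Σ}`, and (b) `ψ` is
order-reflecting: whenever `ψ y₁` is a prefix of `ψ y₂` then `y₁ ≼ y₂` in the relation
induced by `rt_Σ` from the extension order on `FL_Σ`. -/
theorem stmt11 {α : Type} [Fintype α] [Nonempty α] [LinearOrder α] :
    (∃ (n : ℕ) (A : NFA (Xi α ⊕ Theta α) (Fin n)),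
      Recognises A (fun s t => ∃ (x y : FLObs α), s = phi x ∧ t = psiRT y ∧ rtRel x y)) ∧
    (∀ y₁ y₂ : FLObs α, psiRT y₁ <+: psiRT y₂ → inducedRel extLE rtRel y₁ y₂) :=
  stmt11_general
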